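/- arXiv:2203.09074 — 2 statements merged into one kernel-verified Lean document; each statement's English description precedes it below -/
import Mathlib

section
/- Discrete energy conservation for the structure-preserving scheme with H = 0 (single spatial mode / 0-dimensional case): suppose real numbers φ⁰, φ¹, ψ⁰, ψ¹ satisfy (φ¹ − φ⁰)/Δt = ½(ψ¹ + ψ⁰) and (ψ¹ − ψ⁰)/Δt = −(m²/2)(φ¹ + φ⁰) − (λ/(p+1))·(|φ¹|^{p+1} − |φ⁰|^{p+1})/(φ¹ − φ⁰) (with the quotient interpreted as the discrete gradient and φ¹ ≠ φ⁰). Then the discrete energy E^ℓ = ½(ψ^ℓ)² + ½m²(φ^ℓ)² + (λ/(p+1))|φ^ℓ|^{p+1} satisfies E¹ = E⁰ exactly. -/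
/-!
The scheme is the discrete gradient method for `H(φ, ψ) = ψ²/2 + V(φ)`. Multiplying the first
equation by `ψ¹ - ψ⁰` and the second by `φ¹ - φ⁰` gives the same quantity `(φ¹ - φ⁰)(ψ¹ - ψ⁰)/Δt`,
which equals the kinetic increment on one side and minus the potential increment on the other,
because the discrete gradient `F` satisfies `F (φ¹ - φ⁰) = V φ¹ - V φ⁰`.
-/

noncomputable def discreteGradient (V : ℝ → ℝ) (x y : ℝ) : ℝ :=
  (V y - V x) / (y - x)

-- At `x = y` both sides are `0`, the left one because `a / 0 = 0`.
theorem discreteGradient_mul_sub (V : ℝ → ℝ) (x y : ℝ) :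
    discreteGradient V x y * (y - x) = V y - V x :=
  div_mul_cancel_of_imp fun h => by rw [sub_eq_zero.mp h, sub_self]

theorem energy_conserved_of_discreteGradient_step (V : ℝ → ℝ) {Δt φ0 φ1 ψ0 ψ1 F : ℝ}
    (hF : F * (φ1 - φ0) = V φ1 - V φ0)
    (h1 : (φ1 - φ0) / Δt = (1 / 2) * (ψ1 + ψ0))
    (h2 : (ψ1 - ψ0) / Δt = -F) :
    (1 / 2) * ψ1 ^ 2 + V φ1 = (1 / 2) * ψ0 ^ 2 + V φ0 := by
  have kinetic_eq : (1 / 2) * (ψ1 + ψ0) * (ψ1 - ψ0) = -F * (φ1 - φ0) :=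
    calc (1 / 2) * (ψ1 + ψ0) * (ψ1 - ψ0) = (φ1 - φ0) / Δt * (ψ1 - ψ0) := by rw [h1]
      _ = (ψ1 - ψ0) / Δt * (φ1 - φ0) := by ring
      _ = -F * (φ1 - φ0) := by rw [h2]
  linear_combination kinetic_eq - hF

theorem discrete_energy_conservation_0d_general (Δt m lam : ℝ) (p : ℕ)
    (φ0 φ1 ψ0 ψ1 : ℝ)
    (h1 : (φ1 - φ0) / Δt = (1 / 2) * (ψ1 + ψ0))
    (h2 : (ψ1 - ψ0) / Δt = -(m ^ 2 / 2) * (φ1 + φ0)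
        - (lam / (p + 1)) * ((|φ1| ^ (p + 1) - |φ0| ^ (p + 1)) / (φ1 - φ0))) :
    (1 / 2) * ψ1 ^ 2 + (1 / 2) * m ^ 2 * φ1 ^ 2 + (lam / (p + 1)) * |φ1| ^ (p + 1) =
    (1 / 2) * ψ0 ^ 2 + (1 / 2) * m ^ 2 * φ0 ^ 2 + (lam / (p + 1)) * |φ0| ^ (p + 1) := by
  set G := discreteGradient (fun φ => |φ| ^ (p + 1)) φ0 φ1
  have hF : (m ^ 2 / 2 * (φ1 + φ0) + lam / (p + 1) * G) * (φ1 - φ0) =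
      (1 / 2 * m ^ 2 * φ1 ^ 2 + lam / (p + 1) * |φ1| ^ (p + 1)) -
        (1 / 2 * m ^ 2 * φ0 ^ 2 + lam / (p + 1) * |φ0| ^ (p + 1)) := by
    rw [add_mul, mul_assoc _ G, discreteGradient_mul_sub]
    ring
  have energy := energy_conserved_of_discreteGradient_step
    (fun φ => 1 / 2 * m ^ 2 * φ ^ 2 + lam / (p + 1) * |φ| ^ (p + 1)) hF h1
    (by rw [h2, show G = _ / _ from rfl]; ring)
  linear_combination energy

theorem discrete_energy_conservation_0d (Δt m lam : ℝ) (hΔt : 0 < Δt) (p : ℕ) (hp : 2 ≤ p)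
    (φ0 φ1 ψ0 ψ1 : ℝ) (hne : φ1 ≠ φ0)
    (h1 : (φ1 - φ0) / Δt = (1 / 2) * (ψ1 + ψ0))
    (h2 : (ψ1 - ψ0) / Δt = -(m ^ 2 / 2) * (φ1 + φ0)
        - (lam / (p + 1)) * ((|φ1| ^ (p + 1) - |φ0| ^ (p + 1)) / (φ1 - φ0))) :
    (1 / 2) * ψ1 ^ 2 + (1 / 2) * m ^ 2 * φ1 ^ 2 + (lam / (p + 1)) * |φ1| ^ (p + 1) =
    (1 / 2) * ψ0 ^ 2 + (1 / 2) * m ^ 2 * φ0 ^ 2 + (lam / (p + 1)) * |φ0| ^ (p + 1) :=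
  discrete_energy_conservation_0d_general Δt m lam p φ0 φ1 ψ0 ψ1 h1 h2
end

section
/- Exact discrete energy conservation for the linear scheme (λ = 0), one spatial dimension, H = 0: if n-periodic sequences φ^{ℓ}, ψ^{ℓ} satisfy (φ^{ℓ+1}_k − φ^ℓ_k)/Δt = ½(ψ^{ℓ+1}_k + ψ^ℓ_k) and (ψ^{ℓ+1}_k − ψ^ℓ_k)/Δt = ½ δ¹δ¹(φ^{ℓ+1} + φ^ℓ)_k − (m²/2)(φ^{ℓ+1}_k + φ^ℓ_k), then H_C^{(ℓ+1)} = H_C^{(ℓ)}, where H_C^{(ℓ)} = ∑_k [½(ψ^ℓ_k)² + ½(δ¹φ^ℓ)_k² + ½m²(φ^ℓ_k)²]·Δx. -/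
/-!
Write `a = ψ¹ + ψ⁰` and `b = φ¹ + φ⁰`. Since each energy term is a square, the energy difference is
a sum of products (new − old)·(new + old), and the scheme expresses every "new − old" through `a` and
`b`: the mass terms cancel and the difference becomes `Δt Δx / 4 · ∑ (a · δ¹δ¹b + δ¹a · δ¹b)`. On
periodic sequences `δ¹` is skew-adjoint, so this sum vanishes.
-/

/-- Central first difference with grid spacing `Δx`. -/
noncomputable def centralDiff (Δx : ℝ) (u : ℤ → ℝ) : ℤ → ℝ := fun k => (u (k + 1) - u (k - 1)) / (2 * Δx)

open Finset Function

theorem Function.Periodic.sum_range_comp_add_one {M : Type*} [AddCancelCommMonoid M] {f : ℤ → M}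
    {n : ℕ} (hf : Periodic f n) : ∑ k ∈ range n, f (k + 1) = ∑ k ∈ range n, f k := by
  have hfn : f n = f 0 := by simpa using hf 0
  have h := (sum_range_succ' (fun k : ℕ => f k) n).symm.trans (sum_range_succ (fun k : ℕ => f k) n)
  push_cast at h
  rwa [hfn, add_left_inj] at h

theorem Function.Periodic.sum_range_comp_sub_one {M : Type*} [AddCancelCommMonoid M] {f : ℤ → M}
    {n : ℕ} (hf : Periodic f n) : ∑ k ∈ range n, f (k - 1) = ∑ k ∈ range n, f k := by
  simpa using (hf.sub_const 1).sum_range_comp_add_one.symm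

theorem Function.Periodic.centralDiff {Δx : ℝ} {u : ℤ → ℝ} {c : ℤ} (hu : Periodic u c) :
    Periodic (centralDiff Δx u) c := fun k => by
  simp only [_root_.centralDiff, add_right_comm k c, add_sub_right_comm k c, hu (k + 1), hu (k - 1)]

theorem sum_mul_centralDiff (Δx : ℝ) {n : ℕ} {u v : ℤ → ℝ} (hu : Periodic u n) (hv : Periodic v n) :
    ∑ k ∈ range n, u k * centralDiff Δx v k = -∑ k ∈ range n, centralDiff Δx u k * v k := by
  have hfwd : ∑ k ∈ range n, u k * v (k + 1) = ∑ k ∈ range n, u (k - 1) * v k := by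
    simpa using ((hu.sub_const 1).mul hv).sum_range_comp_add_one
  have hbwd : ∑ k ∈ range n, u k * v (k - 1) = ∑ k ∈ range n, u (k + 1) * v k := by
    simpa using ((hu.add_const 1).mul hv).sum_range_comp_sub_one
  calc ∑ k ∈ range n, u k * centralDiff Δx v k
      = (∑ k ∈ range n, u k * v (k + 1) - ∑ k ∈ range n, u k * v (k - 1)) / (2 * Δx) := by
        rw [← sum_sub_distrib, sum_div]
        exact sum_congr rfl fun k _ => by unfold centralDiff; ring
    _ = (∑ k ∈ range n, u (k - 1) * v k - ∑ k ∈ range n, u (k + 1) * v k) / (2 * Δx) := by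
        rw [hfwd, hbwd]
    _ = -∑ k ∈ range n, centralDiff Δx u k * v k := by
        rw [← sum_sub_distrib, sum_div, ← sum_neg_distrib]
        exact sum_congr rfl fun k _ => by unfold centralDiff; ring

noncomputable def energyDensity (Δx m : ℝ) (φ ψ : ℤ → ℝ) (k : ℤ) : ℝ :=
  (1 / 2) * ψ k ^ 2 + (1 / 2) * centralDiff Δx φ k ^ 2 + (1 / 2) * m ^ 2 * φ k ^ 2

theorem energyDensity_sub_energyDensity {Δt Δx m : ℝ} {φ0 φ1 ψ0 ψ1 : ℤ → ℝ}
    (hφ : ∀ k, φ1 k - φ0 k = (1 / 2) * (ψ1 k + ψ0 k) * Δt)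
    (hψ : ∀ k, ψ1 k - ψ0 k = ((1 / 2) * centralDiff Δx (centralDiff Δx (fun j => φ1 j + φ0 j)) k
      - (m ^ 2 / 2) * (φ1 k + φ0 k)) * Δt) (k : ℤ) :
    energyDensity Δx m φ1 ψ1 k - energyDensity Δx m φ0 ψ0 k =
      Δt / 4 * ((ψ1 k + ψ0 k) * centralDiff Δx (centralDiff Δx (fun j => φ1 j + φ0 j)) k
        + centralDiff Δx (fun j => ψ1 j + ψ0 j) k * centralDiff Δx (fun j => φ1 j + φ0 j) k) := by
  have hDφ : centralDiff Δx φ1 k - centralDiff Δx φ0 k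
      = (1 / 2) * centralDiff Δx (fun j => ψ1 j + ψ0 j) k * Δt := by
    unfold centralDiff
    linear_combination (2 * Δx)⁻¹ * (hφ (k + 1) - hφ (k - 1))
  have hDb : centralDiff Δx (fun j => φ1 j + φ0 j) k = centralDiff Δx φ1 k + centralDiff Δx φ0 k := by
    unfold centralDiff; ring
  unfold energyDensity
  rw [hDb]
  linear_combination (ψ1 k + ψ0 k) / 2 * hψ k + m ^ 2 * (φ1 k + φ0 k) / 2 * hφ k
    + (centralDiff Δx φ1 k + centralDiff Δx φ0 k) / 2 * hDφ

theorem linear_sps_energy_conservation_general (n : ℕ) (Δt Δx m : ℝ)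
    (hΔt : 0 < Δt)
    (φ0 φ1 ψ0 ψ1 : ℤ → ℝ)
    (hφ0 : ∀ k : ℤ, φ0 (k + n) = φ0 k) (hφ1 : ∀ k : ℤ, φ1 (k + n) = φ1 k)
    (hψ0 : ∀ k : ℤ, ψ0 (k + n) = ψ0 k) (hψ1 : ∀ k : ℤ, ψ1 (k + n) = ψ1 k)
    (h1 : ∀ k : ℤ, (φ1 k - φ0 k) / Δt = (1 / 2) * (ψ1 k + ψ0 k))
    (h2 : ∀ k : ℤ, (ψ1 k - ψ0 k) / Δt =
        (1 / 2) * centralDiff Δx (centralDiff Δx (fun j => φ1 j + φ0 j)) k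
          - (m ^ 2 / 2) * (φ1 k + φ0 k)) :
    ∑ k ∈ Finset.range n,
        ((1 / 2) * (ψ1 k) ^ 2 + (1 / 2) * (centralDiff Δx φ1 k) ^ 2
          + (1 / 2) * m ^ 2 * (φ1 k) ^ 2) * Δx =
    ∑ k ∈ Finset.range n,
        ((1 / 2) * (ψ0 k) ^ 2 + (1 / 2) * (centralDiff Δx φ0 k) ^ 2
          + (1 / 2) * m ^ 2 * (φ0 k) ^ 2) * Δx := by
  have hpoint := energyDensity_sub_energyDensity (fun k => (div_eq_iff hΔt.ne').1 (h1 k))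
    (fun k => (div_eq_iff hΔt.ne').1 (h2 k))
  have hparts : ∑ k ∈ range n,
      (ψ1 k + ψ0 k) * centralDiff Δx (centralDiff Δx (fun j => φ1 j + φ0 j)) k =
      -∑ k ∈ range n,
        centralDiff Δx (fun j => ψ1 j + ψ0 j) k * centralDiff Δx (fun j => φ1 j + φ0 j) k :=
    sum_mul_centralDiff Δx (Periodic.add hψ1 hψ0) (Periodic.add hφ1 hφ0).centralDiff
  unfold energyDensity at hpoint
  rw [← sub_eq_zero, ← sum_sub_distrib]
  calc _ = Δx * Δt / 4 * ∑ k ∈ range n,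
        ((ψ1 k + ψ0 k) * centralDiff Δx (centralDiff Δx (fun j => φ1 j + φ0 j)) k
          + centralDiff Δx (fun j => ψ1 j + ψ0 j) k * centralDiff Δx (fun j => φ1 j + φ0 j) k) := by
        rw [mul_sum]
        refine sum_congr rfl fun k _ => ?_
        linear_combination Δx * hpoint k
    _ = 0 := by
        rw [sum_add_distrib, hparts]
        ring

theorem linear_sps_energy_conservation (n : ℕ) (hn : 1 ≤ n) (Δt Δx m : ℝ)
    (hΔt : 0 < Δt) (hΔx : 0 < Δx)
    (φ0 φ1 ψ0 ψ1 : ℤ → ℝ)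
    (hφ0 : ∀ k : ℤ, φ0 (k + n) = φ0 k) (hφ1 : ∀ k : ℤ, φ1 (k + n) = φ1 k)
    (hψ0 : ∀ k : ℤ, ψ0 (k + n) = ψ0 k) (hψ1 : ∀ k : ℤ, ψ1 (k + n) = ψ1 k)
    (h1 : ∀ k : ℤ, (φ1 k - φ0 k) / Δt = (1 / 2) * (ψ1 k + ψ0 k))
    (h2 : ∀ k : ℤ, (ψ1 k - ψ0 k) / Δt =
        (1 / 2) * centralDiff Δx (centralDiff Δx (fun j => φ1 j + φ0 j)) k
          - (m ^ 2 / 2) * (φ1 k + φ0 k)) :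
    ∑ k ∈ Finset.range n,
        ((1 / 2) * (ψ1 k) ^ 2 + (1 / 2) * (centralDiff Δx φ1 k) ^ 2
          + (1 / 2) * m ^ 2 * (φ1 k) ^ 2) * Δx =
    ∑ k ∈ Finset.range n,
        ((1 / 2) * (ψ0 k) ^ 2 + (1 / 2) * (centralDiff Δx φ0 k) ^ 2
          + (1 / 2) * m ^ 2 * (φ0 k) ^ 2) * Δx :=
  linear_sps_energy_conservation_general n Δt Δx m hΔt φ0 φ1 ψ0 ψ1 hφ0 hφ1 hψ0 hψ1 h1 h2
end
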